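/- arXiv:2511.10569 — 2 statements merged into one kernel-verified Lean document; each statement's English description precedes it below -/
import Mathlib

section
/- Let M be a right R-module with endomorphism ring S = End_R(M). Suppose M is image-projective and generates its kernels. If S is right centrally morphic, then M is centrally morphic. -/
/-- `M` is image-projective: inclusion of images of endomorphisms implies
membership in the corresponding principal right ideal of `End R M`. -/
def ImageProjective (R M : Type*) [Ring R] [AddCommGroup M] [Module R M] : Prop :=
  ∀ f g : Module.End R M, LinearMap.range f ≤ LinearMap.range g → ∃ s : Module.End R M, f = g * s

/-- `M` generates its kernels: for every endomorphism `f`, `ker f` is the sum of the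
images of endomorphisms whose image is contained in `ker f`. -/
def GeneratesKernels (R M : Type*) [Ring R] [AddCommGroup M] [Module R M] : Prop :=
  ∀ f : Module.End R M,
    LinearMap.ker f =
      ⨆ γ ∈ {γ : Module.End R M | LinearMap.range γ ≤ LinearMap.ker f}, LinearMap.range γ
/-- Right annihilator of an element as a set. -/
def rAnn (S : Type*) [Ring S] (a : S) : Set S := {x : S | a * x = 0}

/-- Left annihilator of an element as a set. -/
def lAnn (S : Type*) [Ring S] (a : S) : Set S := {x : S | x * a = 0}

/-- Principal right ideal `bS`. -/
def rIdeal (S : Type*) [Ring S] (b : S) : Set S := {x : S | ∃ s : S, x = b * s}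

/-- Principal left ideal `Sb`. -/
def lIdeal (S : Type*) [Ring S] (b : S) : Set S := {x : S | ∃ s : S, x = s * b}

/-- `M` is centrally quasi-morphic. -/
def CentrallyQuasiMorphicMod (R M : Type*) [Ring R] [AddCommGroup M] [Module R M] : Prop :=
  ∀ f : Module.End R M, ∃ g h : Module.End R M,
    g ∈ Set.center (Module.End R M) ∧ h ∈ Set.center (Module.End R M) ∧
    LinearMap.ker f = LinearMap.range g ∧ LinearMap.range f = LinearMap.ker h

/-- `M` is centrally morphic. -/
def CentrallyMorphicMod (R M : Type*) [Ring R] [AddCommGroup M] [Module R M] : Prop :=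
  ∀ f : Module.End R M, ∃ g : Module.End R M,
    g ∈ Set.center (Module.End R M) ∧
    LinearMap.ker f = LinearMap.range g ∧ LinearMap.range f = LinearMap.ker g

/-- A ring is right centrally quasi-morphic. -/
def RightCentrallyQuasiMorphic (S : Type*) [Ring S] : Prop :=
  ∀ a : S, ∃ b c : S, b ∈ Set.center S ∧ c ∈ Set.center S ∧
    rAnn S a = rIdeal S b ∧ rIdeal S a = rAnn S c

/-- A ring is right centrally morphic. -/
def RightCentrallyMorphic (S : Type*) [Ring S] : Prop :=
  ∀ a : S, ∃ b : S, b ∈ Set.center S ∧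
    rAnn S a = rIdeal S b ∧ rIdeal S a = rAnn S b

/-! Since `M` generates its kernels, `ker a` is the sum of the images of the `γ` with
`a * γ = 0`, so `ker a = im b` as soon as the right annihilator of `a` in `End R M` is
`b · End R M`. Applying this to `f` and to the central `b` given by right central morphicity
yields `ker f = im b` and `ker b = im f`. -/

section

variable {R M : Type*} [Ring R] [AddCommGroup M] [Module R M]

theorem mem_rAnn_iff_range_le_ker {a γ : Module.End R M} :
    γ ∈ rAnn (Module.End R M) a ↔ LinearMap.range γ ≤ LinearMap.ker a :=
  LinearMap.range_le_ker_iff.symm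

theorem ker_eq_range_of_rAnn_eq_rIdeal (hgen : GeneratesKernels R M) {a b : Module.End R M}
    (h : rAnn (Module.End R M) a = rIdeal (Module.End R M) b) :
    LinearMap.ker a = LinearMap.range b := by
  refine le_antisymm ?_ ?_
  · rw [hgen a]
    refine iSup₂_le fun γ hγ => ?_
    obtain ⟨s, rfl⟩ : γ ∈ rIdeal (Module.End R M) b := h ▸ mem_rAnn_iff_range_le_ker.2 hγ
    exact LinearMap.range_comp_le_range s b
  · have hb : b ∈ rAnn (Module.End R M) a := h ▸ ⟨1, (mul_one b).symm⟩
    exact mem_rAnn_iff_range_le_ker.1 hb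

end

theorem CM_of_endRing_rightCM_general (R M : Type*)
    [Ring R] [AddCommGroup M] [Module R M]
    (hgen : GeneratesKernels R M)
    (hS : RightCentrallyMorphic (Module.End R M)) :
    CentrallyMorphicMod R M := by
  intro f
  obtain ⟨b, hb_center, hann_f, hann_b⟩ := hS f
  exact ⟨b, hb_center, ker_eq_range_of_rAnn_eq_rIdeal hgen hann_f,
    (ker_eq_range_of_rAnn_eq_rIdeal hgen hann_b.symm).symm⟩

/-- If `M` is image-projective and generates its kernels, and `End R M` is right
centrally morphic, then `M` is centrally morphic. -/
theorem CM_of_endRing_rightCM (R M : Type*)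
    [Ring R] [AddCommGroup M] [Module R M]
    (himp : ImageProjective R M) (hgen : GeneratesKernels R M)
    (hS : RightCentrallyMorphic (Module.End R M)) :
    CentrallyMorphicMod R M :=
  CM_of_endRing_rightCM_general R M hgen hS
end

section
/- Let M be a projective right R-module and S = End_R(M). Then M is centrally morphic if and only if M is centrally quasi-morphic and S is right centrally morphic. -/
/-!
In `S = End_R(M)` an endomorphism `x` lies in `rann(a)` iff `range x ≤ ker a`, and, when `M` is
projective, `x` lies in `aS` iff `range x ≤ range a` (lift `x` through `a : M → range a`). Hence
`ker f = range g` and `range f = ker g` give `rann(f) = gS` and `fS = rann(g)` in `S`.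
Conversely, principal right ideals and right annihilators only see submodules that are images of
endomorphisms; quasi-morphicity says that `ker f` and `ker b` are such images, which lets one
recover `ker f = range b` and `range f = ker b` from `rann(f) = bS` and `fS = rann(b)`.
-/

section

open LinearMap

variable {R M : Type*} [Ring R] [AddCommGroup M] [Module R M]

lemma imageProjective_of_projective [Module.Projective R M] : ImageProjective R M := by
  intro f g hle
  obtain ⟨s, hs⟩ := Module.projective_lifting_property g.rangeRestrict
    (f.codRestrict (range g) fun m => hle ⟨m, rfl⟩) g.surjective_rangeRestrict
  refine ⟨s, LinearMap.ext fun m => ?_⟩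
  exact (congrArg Subtype.val (LinearMap.congr_fun hs m)).symm

lemma mem_rAnn_end_iff {a x : Module.End R M} :
    x ∈ rAnn (Module.End R M) a ↔ range x ≤ ker a := by
  rw [range_le_ker_iff, ← Module.End.mul_eq_comp]
  rfl

lemma range_le_of_mem_rIdeal_end {a x : Module.End R M} (hx : x ∈ rIdeal (Module.End R M) a) :
    range x ≤ range a := by
  obtain ⟨s, rfl⟩ := hx
  exact range_comp_le_range s a

lemma mem_rIdeal_end_iff (hM : ImageProjective R M) {a x : Module.End R M} :
    x ∈ rIdeal (Module.End R M) a ↔ range x ≤ range a :=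
  ⟨range_le_of_mem_rIdeal_end, hM x a⟩

lemma self_mem_rIdeal {S : Type*} [Ring S] (a : S) : a ∈ rIdeal S a :=
  ⟨1, (mul_one a).symm⟩

lemma rAnn_end_eq_rIdeal (hM : ImageProjective R M) {f g : Module.End R M}
    (h : ker f = range g) : rAnn (Module.End R M) f = rIdeal (Module.End R M) g := by
  ext x
  rw [mem_rAnn_end_iff, mem_rIdeal_end_iff hM, h]

lemma rIdeal_end_eq_rAnn (hM : ImageProjective R M) {f g : Module.End R M}
    (h : range f = ker g) : rIdeal (Module.End R M) f = rAnn (Module.End R M) g := by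
  ext x
  rw [mem_rAnn_end_iff, mem_rIdeal_end_iff hM, h]

lemma ker_eq_range_of_rAnn_eq_rIdeal_s13 {f g b : Module.End R M} (hg : ker f = range g)
    (h : rAnn (Module.End R M) f = rIdeal (Module.End R M) b) : ker f = range b := by
  have hb : b ∈ rAnn (Module.End R M) f := h ▸ self_mem_rIdeal b
  have hg' : g ∈ rIdeal (Module.End R M) b := h ▸ mem_rAnn_end_iff.2 hg.ge
  exact le_antisymm (hg ▸ range_le_of_mem_rIdeal_end hg') (mem_rAnn_end_iff.1 hb)

lemma range_eq_ker_of_rIdeal_eq_rAnn {f g b : Module.End R M} (hg : ker b = range g)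
    (h : rIdeal (Module.End R M) f = rAnn (Module.End R M) b) : range f = ker b := by
  have hf : f ∈ rAnn (Module.End R M) b := h ▸ self_mem_rIdeal f
  have hg' : g ∈ rIdeal (Module.End R M) f := h ▸ mem_rAnn_end_iff.2 hg.ge
  exact le_antisymm (mem_rAnn_end_iff.1 hf) (hg ▸ range_le_of_mem_rIdeal_end hg')

lemma CentrallyMorphicMod.centrallyQuasiMorphicMod (hM : CentrallyMorphicMod R M) :
    CentrallyQuasiMorphicMod R M := fun f => by
  obtain ⟨g, hg, hker, hrange⟩ := hM f
  exact ⟨g, g, hg, hg, hker, hrange⟩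

lemma CentrallyMorphicMod.rightCentrallyMorphic_end (hM : CentrallyMorphicMod R M)
    (hP : ImageProjective R M) : RightCentrallyMorphic (Module.End R M) := fun f => by
  obtain ⟨g, hg, hker, hrange⟩ := hM f
  exact ⟨g, hg, rAnn_end_eq_rIdeal hP hker, rIdeal_end_eq_rAnn hP hrange⟩

lemma CentrallyQuasiMorphicMod.centrallyMorphicMod (hM : CentrallyQuasiMorphicMod R M)
    (hS : RightCentrallyMorphic (Module.End R M)) : CentrallyMorphicMod R M := fun f => by
  obtain ⟨b, hb, hann, hideal⟩ := hS f
  obtain ⟨g, -, -, -, hg, -⟩ := hM f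
  obtain ⟨g', -, -, -, hg', -⟩ := hM b
  exact ⟨b, hb, ker_eq_range_of_rAnn_eq_rIdeal_s13 hg hann, range_eq_ker_of_rIdeal_eq_rAnn hg' hideal⟩

end

/-- A projective module `M` is centrally morphic iff `M` is centrally quasi-morphic
and `End R M` is right centrally morphic. -/
theorem projective_CM_iff_CQM_and_endRing_rightCM (R M : Type*)
    [Ring R] [AddCommGroup M] [Module R M] [Module.Projective R M] :
    CentrallyMorphicMod R M ↔
      (CentrallyQuasiMorphicMod R M ∧ RightCentrallyMorphic (Module.End R M)) :=
  ⟨fun hM =>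
    ⟨hM.centrallyQuasiMorphicMod, hM.rightCentrallyMorphic_end imageProjective_of_projective⟩,
    fun ⟨hQ, hS⟩ => hQ.centrallyMorphicMod hS⟩
end
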